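/- If a finite simple graph Γ is realized as the 1-skeleton of a convex polyhedron inscribed in the cylinder, then Γ admits a Hamiltonian cycle (geometrically, the equator of the corresponding ideal polyhedron in half-pipe space is such a cycle). -/

import Mathlib

open Set

noncomputable section

/-- Euclidean 3-space. -/
abbrev E3 : Type := EuclideanSpace ℝ (Fin 3)

/-- The unit sphere `x₀² + x₁² + x₂² = 1`. -/
def sphereQ : Set E3 := {p | p 0 ^ 2 + p 1 ^ 2 + p 2 ^ 2 = 1}

/-- The open inside of the sphere. -/
def ballB : Set E3 := {p | p 0 ^ 2 + p 1 ^ 2 + p 2 ^ 2 < 1}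

/-- The hyperboloid `x₀² + x₁² − x₂² = 1`. -/
def hypQ : Set E3 := {p | p 0 ^ 2 + p 1 ^ 2 - p 2 ^ 2 = 1}

/-- The open inside of the (solid) hyperboloid. -/
def hypR : Set E3 := {p | p 0 ^ 2 + p 1 ^ 2 - p 2 ^ 2 < 1}

/-- The cylinder `x₀² + x₁² = 1`. -/
def cylQ : Set E3 := {p | p 0 ^ 2 + p 1 ^ 2 = 1}

/-- The open inside of the (solid) cylinder. -/
def cylR : Set E3 := {p | p 0 ^ 2 + p 1 ^ 2 < 1}

/-- The 1-skeleton of the convex polyhedron `P = convexHull ℝ V`: vertices are the points of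
`V`, and distinct `u, v` are adjacent iff the segment `[u,v]` is a face of `P`. -/
def oneSkeleton (V : Set E3) : SimpleGraph V where
  Adj u v := u ≠ v ∧ IsExtreme ℝ (convexHull ℝ V) (segment ℝ (u : E3) (v : E3))
  symm := by
    constructor
    rintro u v ⟨huv, h⟩
    refine ⟨huv.symm, ?_⟩
    rwa [segment_symm]
  loopless := by constructor; rintro u ⟨h, -⟩; exact h rfl

/-- `V` is the vertex set of a convex polyhedron inscribed in the quadric `Q` with open
inside `R`. -/
def IsInscribedVertexSet (Q R V : Set E3) : Prop :=
  V.Finite ∧ V ⊆ Q ∧ affineSpan ℝ V = ⊤ ∧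
    (∀ v ∈ V, v ∈ Set.extremePoints ℝ (convexHull ℝ V)) ∧
    convexHull ℝ V \ V ⊆ R

/-- `Γ` is realized as the 1-skeleton of a convex polyhedron inscribed in the quadric `Q`
with open inside `R`. -/
def RealizesInscribed (Q R : Set E3) {α : Type*} (Γ : SimpleGraph α) : Prop :=
  ∃ V : Set E3, IsInscribedVertexSet Q R V ∧ Nonempty (Γ ≃g oneSkeleton V)

/-- `Γ` admits a Hamiltonian cycle. -/
def HasHamiltonianCycle {α : Type*} [DecidableEq α] (Γ : SimpleGraph α) : Prop :=
  ∃ (v : α) (p : Γ.Walk v v), p.IsHamiltonianCycle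

/-! Project the vertices onto the base circle of the cylinder. The projection is injective: if
two vertices lay on a common vertical line, their midpoint would be a point of `P` on the cylinder,
hence a vertex, and it is not an extreme point. List the vertices by increasing angle. Two
cyclically consecutive vertices, at angles `α < β`, both maximize the linear form
`p ↦ cos m * p 0 + sin m * p 1` with `m = (α + β) / 2`, while every other vertex, whose angle lies
off the arc `[α, β]`, gives it a smaller value; so they span an exposed edge of `P`, and the
angular order is a Hamiltonian cycle. -/

open Real SimpleGraph

theorem hasHamiltonianCycle_of_adj_add_one {β : Type*} [DecidableEq β] {G : SimpleGraph β}
    {n : ℕ} (w : Fin (n + 3) ≃ β) (hadj : ∀ i, G.Adj (w i) (w (i + 1))) :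
    HasHamiltonianCycle G := by
  let f : cycleGraph (n + 3) →g G :=
    ⟨w, fun {i j} h => by
      rcases cycleGraph_adj.1 h with h | h
      · rw [sub_eq_iff_eq_add'.1 h]; exact (hadj j).symm
      · rw [sub_eq_iff_eq_add'.1 h]; exact hadj i⟩
  have hcycle : (cycleGraph.cycle n).IsHamiltonianCycle :=
    Walk.isHamiltonianCycle_iff_isCycle_and_length_eq.2
      ⟨cycleGraph.isCycle_cycle, by simp [cycleGraph.length_cycle]⟩
  exact ⟨w 0, _, hcycle.map (f := f) w.bijective⟩

theorem HasHamiltonianCycle.map_iso {α β : Type*} [DecidableEq α] [DecidableEq β]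
    {G : SimpleGraph α} {H : SimpleGraph β} (h : HasHamiltonianCycle G) (e : G ≃g H) :
    HasHamiltonianCycle H := by
  obtain ⟨v, p, hp⟩ := h
  exact ⟨e v, p.map e.toHom, hp.map e.bijective⟩

theorem exists_equiv_fin_strictMono {β γ : Type*} [Fintype β] [LinearOrder γ] {f : β → γ}
    (hf : Function.Injective f) {n : ℕ} (hn : Fintype.card β = n) :
    ∃ w : Fin n ≃ β, StrictMono (f ∘ w) := by
  let _ := LinearOrder.lift' f hf
  exact ⟨(Fintype.orderIsoFinOfCardEq β hn).toEquiv, (Fintype.orderIsoFinOfCardEq β hn).strictMono⟩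

theorem finrank_add_one_le_card_of_affineSpan_eq_top {k V P : Type*} [DivisionRing k]
    [AddCommGroup V] [Module k V] [AddTorsor V P] {s : Set P} [Fintype s]
    (hs : affineSpan k s = ⊤) : Module.finrank k V + 1 ≤ Fintype.card s := by
  have : Nonempty s := (AffineSubspace.nonempty_of_affineSpan_eq_top k V P hs).to_subtype
  have := finrank_vectorSpan_range_add_one_le k ((↑) : s → P)
  rwa [Subtype.range_coe, AffineSubspace.vectorSpan_eq_top_of_affineSpan_eq_top k V P hs,
    finrank_top] at this

theorem isExposed_convexHull_of_lt {E : Type*} [AddCommGroup E] [Module ℝ E]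
    [TopologicalSpace E] {s t : Set E} (l : E →L[ℝ] ℝ) {c : ℝ} (hts : t ⊆ s)
    (ht : ∀ x ∈ t, l x = c) (hs : ∀ x ∈ s \ t, l x < c) :
    IsExposed ℝ (convexHull ℝ s) (convexHull ℝ t) := by
  intro hne
  obtain ⟨t₀, ht₀⟩ := convexHull_nonempty_iff.1 hne
  have hl : IsLinearMap ℝ l := l.toLinearMap.isLinear
  have hle : convexHull ℝ s ⊆ {x | l x ≤ c} := convexHull_min
    (fun x hx => by_cases (fun hxt : x ∈ t => (ht x hxt).le) (fun hxt => (hs x ⟨hx, hxt⟩).le))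
    (convex_halfSpace_le hl c)
  have heq : convexHull ℝ t ⊆ {x | l x = c} := convexHull_min ht (convex_hyperplane hl c)
  refine ⟨l, Subset.antisymm
    (fun x hx => ⟨convexHull_mono hts hx, fun y hy => (hle hy).trans (heq hx).ge⟩) ?_⟩
  rintro x ⟨hx, hmax⟩
  have hcx : c ≤ l x := (ht t₀ ht₀).symm.trans_le (hmax t₀ (subset_convexHull ℝ s (hts ht₀)))
  rw [← union_sdiff_cancel hts] at hx
  rcases (s \ t).eq_empty_or_nonempty with hst | hst
  · rwa [hst, union_empty] at hx
  rw [convexHull_union ⟨t₀, ht₀⟩ hst] at hx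
  obtain ⟨p, hp, q, hq, a, b, -, hb, hab, rfl⟩ := mem_convexJoin.1 hx
  have hlq : l q < c := convexHull_min hs (convex_halfSpace_lt hl c) hq
  obtain rfl : a = 1 - b := by linarith
  obtain rfl | hb := hb.eq_or_lt
  · simpa using hp
  · have : l ((1 - b) • p + b • q) < c := by
      rw [map_add, map_smul, map_smul, smul_eq_mul, smul_eq_mul, heq hp]
      nlinarith
    exact absurd hcx this.not_ge

theorem cos_sub_lt_of_mem_arc {α β γ : ℝ} (hαβ : α < β)
    (hγ : γ ∈ Ioo (β - 2 * π) (α + 2 * π) \ Icc α β) :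
    cos (γ - (α + β) / 2) < cos ((β - α) / 2) := by
  have key : ∀ x, (β - α) / 2 < x → x < 2 * π - (β - α) / 2 → cos x < cos ((β - α) / 2) := by
    intro x h1 h2
    rcases le_or_gt x π with hx | hx
    · exact cos_lt_cos_of_nonneg_of_le_pi (by linarith) hx h1
    · rw [← cos_two_pi_sub]
      exact cos_lt_cos_of_nonneg_of_le_pi (by linarith) (by linarith) (by linarith)
  obtain ⟨⟨h1, h2⟩, hout⟩ := hγ
  rcases not_and_or.1 hout with h | h
  · rw [← cos_neg, neg_sub]
    exact key _ (by linarith [not_le.1 h]) (by linarith)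
  · exact key _ (by linarith [not_le.1 h]) (by linarith)

theorem exists_arc_of_strictMono {n : ℕ} {θ : Fin (n + 2) → ℝ} (hθ : StrictMono θ)
    (hspread : θ (Fin.last _) < θ 0 + 2 * π) (i : Fin (n + 2)) :
    ∃ β, (β = θ (i + 1) ∨ β = θ (i + 1) + 2 * π) ∧ θ i < β ∧
      ∀ j, j ≠ i → j ≠ i + 1 → θ j ∈ Ioo (β - 2 * π) (θ i + 2 * π) \ Icc (θ i) β := by
  have hlt : ∀ j k, θ j < θ k + 2 * π := fun j k => by
    linarith [hθ.monotone (Fin.le_last j), hθ.monotone (Fin.zero_le k)]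
  rcases eq_or_ne i (Fin.last _) with rfl | hi
  · refine ⟨θ 0 + 2 * π, by rw [Fin.last_add_one]; right; rfl, hspread, fun j hj hj0 => ?_⟩
    rw [Fin.last_add_one] at hj0
    refine ⟨⟨by linarith [hθ (Fin.pos_of_ne_zero hj0)], hlt _ _⟩, fun hj' => hj ?_⟩
    exact le_antisymm (Fin.le_last j) (hθ.le_iff_le.1 hj'.1)
  · refine ⟨θ (i + 1), .inl rfl, hθ (Fin.lt_add_one_iff.2 (Fin.lt_last_iff_ne_last.2 hi)),
      fun j hj hj1 => ⟨⟨by linarith [hlt (i + 1) j], hlt _ _⟩, fun hj' => hj1 ?_⟩⟩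
    have hij : i < j := (hθ.le_iff_le.1 hj'.1).lt_of_ne' hj
    exact le_antisymm (hθ.le_iff_le.1 hj'.2) (Fin.add_one_le_of_lt hij)

def cylAngle (p : E3) : ℝ := Complex.arg ⟨p 0, p 1⟩

theorem cylAngle_mem_Ioc (p : E3) : cylAngle p ∈ Ioc (-π) π := Complex.arg_mem_Ioc _

theorem norm_mk_eq_one_of_mem_cylQ {p : E3} (hp : p ∈ cylQ) : ‖(⟨p 0, p 1⟩ : ℂ)‖ = 1 := by
  rw [Complex.norm_def, Complex.normSq_mk, ← sq, ← sq, hp, sqrt_one]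

theorem cos_cylAngle {p : E3} (hp : p ∈ cylQ) : cos (cylAngle p) = p 0 := by
  have hnorm := norm_mk_eq_one_of_mem_cylQ hp
  rw [cylAngle, Complex.cos_arg (norm_ne_zero_iff.1 (hnorm ▸ one_ne_zero)), hnorm, div_one]

theorem sin_cylAngle {p : E3} (hp : p ∈ cylQ) : sin (cylAngle p) = p 1 := by
  rw [cylAngle, Complex.sin_arg, norm_mk_eq_one_of_mem_cylQ hp, div_one]

theorem IsInscribedVertexSet.injOn_cylAngle {V : Set E3}
    (hV : IsInscribedVertexSet cylQ cylR V) : InjOn cylAngle V := by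
  obtain ⟨-, hQ, -, hext, hR⟩ := hV
  intro u hu v hv huv
  have h0 : u 0 = v 0 := by rw [← cos_cylAngle (hQ hu), huv, cos_cylAngle (hQ hv)]
  have h1 : u 1 = v 1 := by rw [← sin_cylAngle (hQ hu), huv, sin_cylAngle (hQ hv)]
  have hmQ : midpoint ℝ u v ∈ cylQ := by
    have := hQ hu
    simp only [cylQ, mem_ofPred_eq, midpoint_eq_smul_add, PiLp.smul_apply, PiLp.add_apply] at this ⊢
    rw [← h0, ← h1, ← this, smul_eq_mul, smul_eq_mul, invOf_eq_inv]
    ring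
  have hmV : midpoint ℝ u v ∈ V := by
    by_contra hmV
    have hmP := segment_subset_convexHull hu hv (midpoint_mem_segment (𝕜 := ℝ) u v)
    exact (hR ⟨hmP, hmV⟩ : _ < _).ne hmQ
  have := (mem_extremePoints.1 (hext _ hmV)).2 u (subset_convexHull ℝ V hu) v
    (subset_convexHull ℝ V hv) (midpoint_mem_openSegment u v)
  exact this.1.trans this.2.symm

def horizontalForm (m : ℝ) : E3 →L[ℝ] ℝ :=
  cos m • EuclideanSpace.proj 0 + sin m • EuclideanSpace.proj 1

theorem horizontalForm_apply_of_eq {m γ : ℝ} {p : E3} (h0 : p 0 = cos γ) (h1 : p 1 = sin γ) :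
    horizontalForm m p = cos (γ - m) := by
  change cos m * p 0 + sin m * p 1 = _
  rw [h0, h1, cos_sub]
  ring

theorem isExtreme_segment_of_arc {V : Set E3} {u v : E3} (hu : u ∈ V) (hv : v ∈ V) {α β : ℝ}
    (hαβ : α < β) (hu0 : u 0 = cos α) (hu1 : u 1 = sin α) (hv0 : v 0 = cos β)
    (hv1 : v 1 = sin β)
    (hV : ∀ x ∈ V, x ≠ u → x ≠ v →
      ∃ γ ∈ Ioo (β - 2 * π) (α + 2 * π) \ Icc α β, x 0 = cos γ ∧ x 1 = sin γ) :
    IsExtreme ℝ (convexHull ℝ V) (segment ℝ u v) := by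
  rw [← convexHull_pair]
  refine (isExposed_convexHull_of_lt (horizontalForm ((α + β) / 2)) (c := cos ((β - α) / 2))
    (pair_subset hu hv) ?_ ?_).isExtreme
  · rintro x (rfl | rfl)
    · rw [horizontalForm_apply_of_eq hu0 hu1, ← cos_neg]
      congr 1
      ring
    · rw [horizontalForm_apply_of_eq hv0 hv1]
      congr 1
      ring
  · rintro x ⟨hx, hxuv⟩
    obtain ⟨γ, hγ, hx0, hx1⟩ := hV x hx (fun h => hxuv (.inl h)) (fun h => hxuv (.inr h))
    rw [horizontalForm_apply_of_eq hx0 hx1]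
    exact cos_sub_lt_of_mem_arc hαβ hγ

theorem IsInscribedVertexSet.hasHamiltonianCycle_oneSkeleton {V : Set E3} [DecidableEq V]
    (hV : IsInscribedVertexSet cylQ cylR V) : HasHamiltonianCycle (oneSkeleton V) := by
  have hinj := hV.injOn_cylAngle
  obtain ⟨hfin, hQ, hspan, -, -⟩ := hV
  let _ : Fintype V := hfin.fintype
  obtain ⟨n, hn⟩ : ∃ n, Fintype.card V = n + 3 := by
    have := finrank_add_one_le_card_of_affineSpan_eq_top hspan
    rw [finrank_euclideanSpace_fin] at this
    exact ⟨Fintype.card V - 3, by omega⟩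
  obtain ⟨w, hw⟩ := exists_equiv_fin_strictMono hinj.injective hn
  set θ : Fin (n + 3) → ℝ := fun j => cylAngle (w j)
  have hcos (j) : (w j : E3) 0 = cos (θ j) := (cos_cylAngle (hQ (w j).2)).symm
  have hsin (j) : (w j : E3) 1 = sin (θ j) := (sin_cylAngle (hQ (w j).2)).symm
  have hspread : θ (Fin.last _) < θ 0 + 2 * π := by
    linarith [(cylAngle_mem_Ioc (w (Fin.last _))).2, (cylAngle_mem_Ioc (w 0)).1]
  refine hasHamiltonianCycle_of_adj_add_one w fun i => ⟨w.injective.ne (by simp), ?_⟩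
  obtain ⟨β, hβ, hiβ, hout⟩ := exists_arc_of_strictMono (θ := θ) hw hspread i
  have hβ' : cos β = cos (θ (i + 1)) ∧ sin β = sin (θ (i + 1)) := by
    rcases hβ with rfl | rfl <;> simp only [cos_add_two_pi, sin_add_two_pi, and_self]
  refine isExtreme_segment_of_arc (w i).2 (w (i + 1)).2 hiβ (hcos i) (hsin i)
    (hβ'.1 ▸ hcos (i + 1)) (hβ'.2 ▸ hsin (i + 1)) fun x hx hxi hxi1 => ?_
  obtain ⟨j, hj⟩ := w.surjective ⟨x, hx⟩
  obtain rfl : (w j : E3) = x := congrArg Subtype.val hj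
  exact ⟨_, hout j (fun h => hxi (h ▸ rfl)) (fun h => hxi1 (h ▸ rfl)), hcos j, hsin j⟩

theorem hamiltonian_of_inscribed_cylinder_general
    {α : Type*} [DecidableEq α] (Γ : SimpleGraph α)
    (h : RealizesInscribed cylQ cylR Γ) :
    HasHamiltonianCycle Γ := by
  classical
  obtain ⟨V, hV, ⟨e⟩⟩ := h
  exact hV.hasHamiltonianCycle_oneSkeleton.map_iso e.symm

/-- If `Γ` is realized as the 1-skeleton of a convex polyhedron inscribed in the
cylinder, then `Γ` admits a Hamiltonian cycle. -/
theorem hamiltonian_of_inscribed_cylinder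
    {α : Type*} [Fintype α] [DecidableEq α] (Γ : SimpleGraph α)
    (h : RealizesInscribed cylQ cylR Γ) :
    HasHamiltonianCycle Γ :=
  hamiltonian_of_inscribed_cylinder_general Γ h

end
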